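/- Closed form and concavity of seller 2's profit under binding IC1 (uniform case): let A ∈ (0,1), p2 ∈ (0,1] and p1 > 0 with B(p1,p2) ≠ 0, and set α̲ = (M1(p2) − p1·D1²(p1,p2)) / (p1·B(p1,p2)). Then p2·D2²(p1,p2) + (1−α̲)·p2·B(p1,p2) = p2·(1 − p1·p2 − M1(p2)/p1). Moreover, if M1(p2) > 0, the function p1 ↦ p2·(1 − p1·p2 − M1(p2)/p1) is strictly concave on (0,∞). -/

import Mathlib

/-- Demand of seller 1 when ranked second (uniform match utilities). -/
noncomputable def D12 (A p1 p2 : ℝ) : ℝ := -A^2/2 + p1^2/2 - p1*p2 + A - p1 + p2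

/-- Demand of seller 2 when ranked second (uniform match utilities). -/
noncomputable def D22 (A p1 p2 : ℝ) : ℝ := -A^2/2 + p2^2/2 - p1*p2 + A + p1 - p2

/-- The bonus from being ranked first instead of second (uniform case). -/
noncomputable def bonus (A p1 p2 : ℝ) : ℝ := (1-A)^2 - (1/2)*(p1-p2)^2

/-- Seller 1's optimal deviation value when ranked second. -/
noncomputable def M1 (A p2 : ℝ) : ℝ :=
  sSup ((fun p' => p' * D12 A p' p2) '' Set.Icc (0:ℝ) 1)

/-- Seller 2's optimal deviation value when ranked second. -/
noncomputable def M2 (A p1 : ℝ) : ℝ :=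
  sSup ((fun p' => p' * D22 A p1 p') '' Set.Icc (0:ℝ) 1)

/-- The function whose nonpositivity characterizes implementable prices. -/
noncomputable def H (A p1 p2 : ℝ) : ℝ := M1 A p2 / p1 + M2 A p1 / p2 + p1*p2 - 1

/-- The set of implementable prices. -/
def implementableP (A : ℝ) : Set (ℝ × ℝ) :=
  {q | 0 < q.1 ∧ q.1 ≤ 1 ∧ 0 < q.2 ∧ q.2 ≤ 1 ∧ H A q.1 q.2 ≤ 0}

/-- The set of implementable search orders at prices `(p1, p2)`. -/
def phi (A p1 p2 : ℝ) : Set ℝ :=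
  {α | α ∈ Set.Icc (0:ℝ) 1
    ∧ M1 A p2 ≤ p1 * D12 A p1 p2 + α * p1 * bonus A p1 p2
    ∧ M2 A p1 ≤ p2 * D22 A p1 p2 + (1-α) * p2 * bonus A p1 p2}

lemma D12_add_D22_add_bonus (A p1 p2 : ℝ) :
    D12 A p1 p2 + D22 A p1 p2 + bonus A p1 p2 = 1 - p1 * p2 := by
  simp only [D12, D22, bonus]
  ring

theorem StrictConcaveOn.const_mul {E : Type*} [AddCommMonoid E] [Module ℝ E] {s : Set E}
    {f : E → ℝ} {c : ℝ} (hc : 0 < c) (hf : StrictConcaveOn ℝ s f) :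
    StrictConcaveOn ℝ s fun x => c * f x := by
  refine ⟨hf.1, fun x hx y hy hxy a b ha hb hab => ?_⟩
  have := mul_lt_mul_of_pos_left (hf.2 hx hy hxy ha hb hab) hc
  simp only [smul_eq_mul] at this ⊢
  linarith

theorem strictConcaveOn_neg_div {c : ℝ} (hc : 0 < c) :
    StrictConcaveOn ℝ (Set.Ioi 0) fun x : ℝ => -(c / x) := by
  have hinv : StrictConcaveOn ℝ (Set.Ioi 0) fun x : ℝ => -x⁻¹ := by
    have h := (strictConvexOn_zpow (m := -1) (by norm_num) (by norm_num)).neg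
    simp only [zpow_neg, zpow_one] at h
    exact h
  simpa [div_eq_mul_inv] using hinv.const_mul hc

theorem concaveOn_const_sub_mul (a b : ℝ) {s : Set ℝ} (hs : Convex ℝ s) :
    ConcaveOn ℝ s fun x => a - b * x := by
  refine ((LinearMap.concaveOn (LinearMap.mulLeft ℝ (-b)) hs).add_const a).congr fun x _ => ?_
  simp only [Pi.add_apply, LinearMap.mulLeft_apply]
  ring

theorem binding_IC1_profit_general
    (A p1 p2 : ℝ)
    (hp2 : p2 ∈ Set.Ioc (0:ℝ) 1) (hp1 : 0 < p1)
    (hB : bonus A p1 p2 ≠ 0) :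
    p2 * D22 A p1 p2
        + (1 - (M1 A p2 - p1 * D12 A p1 p2) / (p1 * bonus A p1 p2))
            * p2 * bonus A p1 p2
      = p2 * (1 - p1*p2 - M1 A p2 / p1)
    ∧ (0 < M1 A p2 →
        StrictConcaveOn ℝ (Set.Ioi (0:ℝ))
          (fun x : ℝ => p2 * (1 - x*p2 - M1 A p2 / x))) := by
  refine ⟨?_, fun hM => ?_⟩
  · field_simp
    linear_combination (p1 * p2) * D12_add_D22_add_bonus A p1 p2
  · have hsplit : (fun x : ℝ => p2 * (1 - x*p2 - M1 A p2 / x))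
        = fun x => (p2 - p2 ^ 2 * x) + -(p2 * M1 A p2 / x) := by
      funext x
      ring
    rw [hsplit]
    exact (concaveOn_const_sub_mul _ _ (convex_Ioi 0)).add_strictConcaveOn
      (strictConcaveOn_neg_div (mul_pos hp2.1 hM))

/-- Closed form and concavity of seller 2's profit under binding IC1 (uniform
case): with `α̲ = (M1(p2) - p1·D1²)/(p1·B)`,
`p2·D2² + (1-α̲)·p2·B = p2·(1 - p1·p2 - M1(p2)/p1)`, and if `M1(p2) > 0`
this expression is strictly concave in `p1` on `(0,∞)`. -/
theorem binding_IC1_profit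
    (A p1 p2 : ℝ) (hA : A ∈ Set.Ioo (0:ℝ) 1)
    (hp2 : p2 ∈ Set.Ioc (0:ℝ) 1) (hp1 : 0 < p1)
    (hB : bonus A p1 p2 ≠ 0) :
    p2 * D22 A p1 p2
        + (1 - (M1 A p2 - p1 * D12 A p1 p2) / (p1 * bonus A p1 p2))
            * p2 * bonus A p1 p2
      = p2 * (1 - p1*p2 - M1 A p2 / p1)
    ∧ (0 < M1 A p2 →
        StrictConcaveOn ℝ (Set.Ioi (0:ℝ))
          (fun x : ℝ => p2 * (1 - x*p2 - M1 A p2 / x))) :=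
  binding_IC1_profit_general A p1 p2 hp2 hp1 hB
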